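/- arXiv:0711.4573 — 4 statements merged into one kernel-verified Lean document; each statement's English description precedes it below -/
import Mathlib

section
/- Let X ∈ F be such that Max(X) is defined. Then for every Y ∈ F with Y ∩ X ≠ ∅ and |X| ≤ |Y| ≤ |Max(X)|, the set Y overlaps X or Y overlaps Max(X). -/
/-!
A set `Y` meeting `X` fails to overlap `X` only if `Y ⊆ X` or `X ⊆ Y`. If `Y ⊆ X`, then `Y = X`
by size, and `X` overlaps `Max(X)`. If `X ⊆ Y`, then either `Max(X) ⊆ Y`, so `Y = Max(X)` by size
and `Y` overlaps `X`, or `Y` inherits the overlap of `X` with `Max(X)`.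
-/

/-- Two sets `X` and `Y` overlap if `X ∩ Y ≠ ∅`, `X \ Y ≠ ∅` and `Y \ X ≠ ∅`. -/
def Overlaps {V : Type*} [DecidableEq V] (X Y : Finset V) : Prop :=
  (X ∩ Y).Nonempty ∧ (X \ Y).Nonempty ∧ (Y \ X).Nonempty

open Finset

namespace Overlaps

variable {V : Type*} [DecidableEq V] {X Y M : Finset V}

theorem iff_not_subset : Overlaps X Y ↔ (X ∩ Y).Nonempty ∧ ¬X ⊆ Y ∧ ¬Y ⊆ X := by
  simp only [Overlaps, sdiff_nonempty]

theorem symm (h : Overlaps X Y) : Overlaps Y X :=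
  ⟨inter_comm X Y ▸ h.1, h.2.2, h.2.1⟩

theorem of_subset_left (h : Overlaps X M) (hXY : X ⊆ Y) (hMY : ¬M ⊆ Y) : Overlaps Y M := by
  rw [iff_not_subset] at h ⊢
  exact ⟨h.1.mono (inter_subset_inter hXY subset_rfl), fun hYM => h.2.1 (hXY.trans hYM), hMY⟩

theorem overlaps_or_overlaps_of_card_le (hMX : Overlaps M X) (hYX : (Y ∩ X).Nonempty)
    (hXY : #X ≤ #Y) (hYM : #Y ≤ #M) : Overlaps Y X ∨ Overlaps Y M := by
  by_cases hYsubX : Y ⊆ X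
  · obtain rfl := eq_of_subset_of_card_le hYsubX hXY
    exact Or.inr hMX.symm
  by_cases hXsubY : X ⊆ Y
  · by_cases hMsubY : M ⊆ Y
    · obtain rfl := eq_of_subset_of_card_le hMsubY hYM
      exact Or.inl hMX
    · exact Or.inr (hMX.symm.of_subset_left hXsubY hMsubY)
  · exact Or.inl (iff_not_subset.2 ⟨hYX, hYsubX, hXsubY⟩)

end Overlaps

theorem stmt0_general {V : Type*} [DecidableEq V]
    (F : Finset (Finset V))
    (X M : {X : Finset V // X ∈ F})
    (hMover : Overlaps (M : Finset V) (X : Finset V))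
    (Y : {X : Finset V // X ∈ F})
    (hYX : ((Y : Finset V) ∩ (X : Finset V)).Nonempty)
    (h1 : (X : Finset V).card ≤ (Y : Finset V).card)
    (h2 : (Y : Finset V).card ≤ (M : Finset V).card) :
    Overlaps (Y : Finset V) (X : Finset V) ∨ Overlaps (Y : Finset V) (M : Finset V) :=
  hMover.overlaps_or_overlaps_of_card_le hYX h1 h2

/-- Let `X ∈ F` with `Max(X)` defined (here `M`, the `≼`-least set of size `≥ |X|`
overlapping `X`, for an LF order `lo`). Then every `Y ∈ F` with `Y ∩ X ≠ ∅` and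
`|X| ≤ |Y| ≤ |Max(X)|` overlaps `X` or `Max(X)`. -/
theorem stmt0 {V : Type*} [Fintype V] [DecidableEq V]
    (F : Finset (Finset V))
    (lo : LinearOrder {X : Finset V // X ∈ F})
    (hLF : ∀ A B : {X : Finset V // X ∈ F},
      (B : Finset V).card < (A : Finset V).card → lo.lt A B)
    (X M : {X : Finset V // X ∈ F})
    (hMover : Overlaps (M : Finset V) (X : Finset V))
    (hMcard : (X : Finset V).card ≤ (M : Finset V).card)
    (hMleast : ∀ Z : {X : Finset V // X ∈ F},
      (X : Finset V).card ≤ (Z : Finset V).card →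
      Overlaps (Z : Finset V) (X : Finset V) → lo.le M Z)
    (Y : {X : Finset V // X ∈ F})
    (hYX : ((Y : Finset V) ∩ (X : Finset V)).Nonempty)
    (h1 : (X : Finset V).card ≤ (Y : Finset V).card)
    (h2 : (Y : Finset V).card ≤ (M : Finset V).card) :
    Overlaps (Y : Finset V) (X : Finset V) ∨ Overlaps (Y : Finset V) (M : Finset V) :=
  stmt0_general F X M hMover Y hYX h1 h2
end

section
/- Let A, B ∈ F be two overlapping sets with |A| ≤ |B|, and let v ∈ A ∩ B. Then every Y ∈ F with v ∈ Y and |A| ≤ |Y| ≤ |B| belongs to the same overlap class as A and B, i.e., A, B and Y lie in the same connected component of the overlap graph OG(F). -/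
/-- The overlap graph of a family `F`: vertices are the members of `F`,
two sets are adjacent iff they overlap. -/
def OG {V : Type*} [DecidableEq V] (F : Finset (Finset V)) :
    SimpleGraph {X : Finset V // X ∈ F} where
  Adj A B := Overlaps (A : Finset V) (B : Finset V)
  symm := by
    constructor
    rintro A B ⟨h1, h2, h3⟩
    exact ⟨by rwa [Finset.inter_comm], h3, h2⟩
  loopless := by
    constructor
    rintro A ⟨-, h2, -⟩
    simp at h2

/-!
Sets sharing a point and not overlapping are nested. If `Y` overlapped neither `A` nor `B`, the
cardinality bounds would therefore force `A ⊆ Y ⊆ B`, contradicting `A \ B ≠ ∅`. So `Y` is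
adjacent to `A` or to `B`, and these two are adjacent.
-/

section

variable {V : Type*} [DecidableEq V]

theorem subset_or_subset_of_not_overlaps {X Z : Finset V} {v : V} (hvX : v ∈ X) (hvZ : v ∈ Z)
    (h : ¬Overlaps X Z) : X ⊆ Z ∨ Z ⊆ X := by
  by_contra! hnested
  exact h ⟨⟨v, Finset.mem_inter.mpr ⟨hvX, hvZ⟩⟩,
    Finset.sdiff_nonempty.mpr hnested.1, Finset.sdiff_nonempty.mpr hnested.2⟩

theorem subset_of_not_overlaps_of_card_le {X Z : Finset V} {v : V} (hvX : v ∈ X) (hvZ : v ∈ Z)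
    (h : ¬Overlaps X Z) (hcard : X.card ≤ Z.card) : X ⊆ Z := by
  rcases subset_or_subset_of_not_overlaps hvX hvZ h with hXZ | hZX
  · exact hXZ
  · exact (Finset.eq_of_subset_of_card_le hZX hcard).ge

theorem overlaps_or_overlaps_of_card_between {A B Y : Finset V} {v : V} (hAB : Overlaps A B)
    (hvA : v ∈ A) (hvB : v ∈ B) (hvY : v ∈ Y) (hAY : A.card ≤ Y.card) (hYB : Y.card ≤ B.card) :
    Overlaps A Y ∨ Overlaps Y B := by
  by_contra! hnot
  have hAsubY := subset_of_not_overlaps_of_card_le hvA hvY hnot.1 hAY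
  have hYsubB := subset_of_not_overlaps_of_card_le hvY hvB hnot.2 hYB
  exact Finset.sdiff_nonempty.mp hAB.2.1 (hAsubY.trans hYsubB)

end

theorem stmt3_general {V : Type*} [DecidableEq V]
    (F : Finset (Finset V))
    (A B : {X : Finset V // X ∈ F})
    (hAB : Overlaps (A : Finset V) (B : Finset V))
    (v : V) (hvA : v ∈ (A : Finset V)) (hvB : v ∈ (B : Finset V))
    (Y : {X : Finset V // X ∈ F}) (hvY : v ∈ (Y : Finset V))
    (h1 : (A : Finset V).card ≤ (Y : Finset V).card)
    (h2 : (Y : Finset V).card ≤ (B : Finset V).card) :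
    (OG F).Reachable A B ∧ (OG F).Reachable A Y ∧ (OG F).Reachable B Y := by
  have hrAB : (OG F).Reachable A B := SimpleGraph.Adj.reachable (G := OG F) hAB
  have hAY : (OG F).Reachable A Y := by
    rcases overlaps_or_overlaps_of_card_between hAB hvA hvB hvY h1 h2 with hAY | hYB
    · exact SimpleGraph.Adj.reachable (G := OG F) hAY
    · exact hrAB.trans (SimpleGraph.Adj.reachable (G := OG F) hYB).symm
  exact ⟨hrAB, hAY, hrAB.symm.trans hAY⟩

/-- Let `A, B ∈ F` be overlapping with `|A| ≤ |B|` and let `v ∈ A ∩ B`. Then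
every `Y ∈ F` with `v ∈ Y` and `|A| ≤ |Y| ≤ |B|` is in the same connected
component of the overlap graph as `A` and `B`. -/
theorem stmt3 {V : Type*} [Fintype V] [DecidableEq V]
    (F : Finset (Finset V))
    (A B : {X : Finset V // X ∈ F})
    (hAB : Overlaps (A : Finset V) (B : Finset V))
    (hcard : (A : Finset V).card ≤ (B : Finset V).card)
    (v : V) (hvA : v ∈ (A : Finset V)) (hvB : v ∈ (B : Finset V))
    (Y : {X : Finset V // X ∈ F}) (hvY : v ∈ (Y : Finset V))
    (h1 : (A : Finset V).card ≤ (Y : Finset V).card)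
    (h2 : (Y : Finset V).card ≤ (B : Finset V).card) :
    (OG F).Reachable A B ∧ (OG F).Reachable A Y ∧ (OG F).Reachable B Y :=
  stmt3_general F A B hAB v hvA hvB Y hvY h1 h2
end

section
/- Fix an LF order ≼ on F and a lex column order ≤ on V. Let X, Y ∈ F be such that Y overlaps X. Then there exists Z ∈ F with Z ≼ Y such that left(X) ∉ Z and right(X) ∈ Z. -/
/-!
A lex column order is monotone for the lexicographic order of membership vectors, also after
truncating the vectors at `Y`. So if `left(X)` and `right(X)` had the same membership in every
`Z ≼ Y`, every element of `X` would be squeezed to the same truncated vector, in particular to the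
same membership in `Y`, which is impossible when `Y` overlaps `X`. Hence `left(X)` and `right(X)`
differ at some `Z ≼ Y`, and at the first such `Z` the lex condition gives `left(X) ∉ Z ∋ right(X)`.
-/

namespace LexColumnOrder

variable {ι V : Type*} [LinearOrder ι]

theorem exists_first_disagreement [WellFoundedLT ι] (mem : V → ι → Prop) {v w : V} {Z : ι}
    (hZ : ¬(mem v Z ↔ mem w Z)) :
    ∃ Z₀ ≤ Z, ¬(mem v Z₀ ↔ mem w Z₀) ∧ ∀ Z' < Z₀, (mem v Z' ↔ mem w Z') := by
  obtain ⟨Z₀, hZ₀, hmin⟩ := wellFounded_lt.has_min {Z | ¬(mem v Z ↔ mem w Z)} ⟨Z, hZ⟩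
  refine ⟨Z₀, not_lt.mp fun h => hmin Z hZ h, hZ₀, fun Z' hZ' => ?_⟩
  by_contra h
  exact hmin Z' h hZ'

variable [LinearOrder V]

/-- `mem v Z` is the entry of the membership vector of `v` at `Z`. -/
def IsLexColumnOrder (mem : V → ι → Prop) : Prop :=
  ∀ v w : V, v < w → ∀ Z : ι, ¬(mem v Z ↔ mem w Z) →
    (∀ Z' < Z, (mem v Z' ↔ mem w Z')) → ¬mem v Z ∧ mem w Z

variable [WellFoundedLT ι] {mem : V → ι → Prop}

theorem IsLexColumnOrder.exists_le_notMem_mem (hlex : IsLexColumnOrder mem) {v w : V}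
    (hvw : v ≤ w) {Z : ι} (hZ : ¬(mem v Z ↔ mem w Z)) : ∃ Z₀ ≤ Z, ¬mem v Z₀ ∧ mem w Z₀ := by
  have hne : v ≠ w := by rintro rfl; exact hZ Iff.rfl
  obtain ⟨Z₀, hZ₀Z, hdis, hprev⟩ := exists_first_disagreement mem hZ
  exact ⟨Z₀, hZ₀Z, hlex v w (lt_of_le_of_ne hvw hne) Z₀ hdis hprev⟩

theorem IsLexColumnOrder.agree_of_le_of_le (hlex : IsLexColumnOrder mem) {l v r : V}
    (hlv : l ≤ v) (hvr : v ≤ r) {Y : ι} (hlr : ∀ Z ≤ Y, (mem l Z ↔ mem r Z)) :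
    ∀ Z ≤ Y, (mem l Z ↔ mem v Z) := by
  intro Z hZY
  by_contra hZ
  obtain ⟨Z₀, hZ₀Z, hdis, hprev⟩ := exists_first_disagreement mem hZ
  have hne : l ≠ v := by rintro rfl; exact hdis Iff.rfl
  obtain ⟨hlZ₀, hvZ₀⟩ := hlex l v (lt_of_le_of_ne hlv hne) Z₀ hdis hprev
  have hrZ₀ : ¬mem r Z₀ := fun h => hlZ₀ ((hlr Z₀ (hZ₀Z.trans hZY)).mpr h)
  -- `v` and `r` first differ at `Z₀` as well, where the lex condition would force `v ∉ Z₀`.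
  have hvr_prev : ∀ Z' < Z₀, (mem v Z' ↔ mem r Z') := fun Z' hZ' =>
    (hprev Z' hZ').symm.trans (hlr Z' ((hZ'.le.trans hZ₀Z).trans hZY))
  have hvr_ne : v ≠ r := by rintro rfl; exact hrZ₀ hvZ₀
  exact (hlex v r (lt_of_le_of_ne hvr hvr_ne) Z₀ (by tauto) hvr_prev).1 hvZ₀

end LexColumnOrder

open LexColumnOrder in
theorem stmt7_general {V : Type*} [DecidableEq V]
    (F : Finset (Finset V))
    (lo : LinearOrder {X : Finset V // X ∈ F})
    (lv : LinearOrder V)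
    (hlex : ∀ v w : V, lv.lt v w →
      ∀ Z : {X : Finset V // X ∈ F},
        ¬(v ∈ (Z : Finset V) ↔ w ∈ (Z : Finset V)) →
        (∀ Z' : {X : Finset V // X ∈ F}, lo.lt Z' Z →
          (v ∈ (Z' : Finset V) ↔ w ∈ (Z' : Finset V))) →
        v ∉ (Z : Finset V) ∧ w ∈ (Z : Finset V))
    (X Y : {X : Finset V // X ∈ F})
    (hover : Overlaps (Y : Finset V) (X : Finset V))
    (l r : V)
    (hl : l ∈ (X : Finset V) ∧ ∀ u ∈ (X : Finset V), lv.le l u)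
    (hr : r ∈ (X : Finset V) ∧ ∀ u ∈ (X : Finset V), lv.le u r) :
    ∃ Z : {X : Finset V // X ∈ F}, lo.le Z Y ∧
      l ∉ (Z : Finset V) ∧ r ∈ (Z : Finset V) := by
  let instF : LinearOrder {X : Finset V // X ∈ F} := lo
  let instV : LinearOrder V := lv
  -- `↥F` also inherits the inclusion order of `Finset V`, which instance search would pick here.
  have : @WellFoundedLT _ instF.toLT := @Finite.to_wellFoundedLT _ _ instF.toPreorder
  have hlex' : IsLexColumnOrder fun (v : V) (Z : {X : Finset V // X ∈ F}) => v ∈ (Z : Finset V) :=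
    hlex
  by_cases hdis : ∃ Z, lo.le Z Y ∧ ¬(l ∈ (Z : Finset V) ↔ r ∈ (Z : Finset V))
  · obtain ⟨Z, hZY, hZ⟩ := hdis
    obtain ⟨Z₀, hZ₀Z, hlZ₀, hrZ₀⟩ := hlex'.exists_le_notMem_mem (hl.2 r hr.1) hZ
    exact ⟨Z₀, lo.le_trans _ _ _ hZ₀Z hZY, hlZ₀, hrZ₀⟩
  · push Not at hdis
    have hY : ∀ v ∈ (X : Finset V), (l ∈ (Y : Finset V) ↔ v ∈ (Y : Finset V)) := fun v hv =>
      hlex'.agree_of_le_of_le (hl.2 v hv) (hr.2 v hv) hdis Y (lo.le_refl Y)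
    obtain ⟨⟨a, ha⟩, -, ⟨b, hb⟩⟩ := hover
    rw [Finset.mem_inter] at ha
    rw [Finset.mem_sdiff] at hb
    exact absurd ((hY b hb.1).mp ((hY a ha.2).mpr ha.1)) hb.2

/-- Fix an LF order `lo` on `F` and a lex column order `lv` on `V`.
If `Y` overlaps `X`, then there exists `Z ∈ F` with `Z ≼ Y` such that
`left(X) ∉ Z` and `right(X) ∈ Z` (where `left(X)`/`right(X)` are the
`lv`-minimum/maximum of `X`). -/
theorem stmt7 {V : Type*} [Fintype V] [DecidableEq V]
    (F : Finset (Finset V))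
    (lo : LinearOrder {X : Finset V // X ∈ F})
    (hLF : ∀ A B : {X : Finset V // X ∈ F},
      (B : Finset V).card < (A : Finset V).card → lo.lt A B)
    (lv : LinearOrder V)
    (hlex : ∀ v w : V, lv.lt v w →
      ∀ Z : {X : Finset V // X ∈ F},
        ¬(v ∈ (Z : Finset V) ↔ w ∈ (Z : Finset V)) →
        (∀ Z' : {X : Finset V // X ∈ F}, lo.lt Z' Z →
          (v ∈ (Z' : Finset V) ↔ w ∈ (Z' : Finset V))) →
        v ∉ (Z : Finset V) ∧ w ∈ (Z : Finset V))
    (X Y : {X : Finset V // X ∈ F})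
    (hover : Overlaps (Y : Finset V) (X : Finset V))
    (l r : V)
    (hl : l ∈ (X : Finset V) ∧ ∀ u ∈ (X : Finset V), lv.le l u)
    (hr : r ∈ (X : Finset V) ∧ ∀ u ∈ (X : Finset V), lv.le u r) :
    ∃ Z : {X : Finset V // X ∈ F}, lo.le Z Y ∧
      l ∉ (Z : Finset V) ∧ r ∈ (Z : Finset V) :=
  stmt7_general F lo lv hlex X Y hover l r hl hr
end

section
/- Fix an LF order ≼ on F and a lex column order ≤ on V, and let X ∈ F be nonempty. Then Max(X) is defined if and only if there exists a set Y ∈ F with |Y| ≥ |X| such that left(X) ∉ Y and right(X) ∈ Y. -/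
def Splits {V : Type*} (Z X : Finset V) : Prop :=
  (∃ u ∈ X, u ∈ Z) ∧ ∃ v ∈ X, v ∉ Z

lemma not_splits_iff {V : Type*} {Z X : Finset V} :
    ¬Splits Z X ↔ ∀ u ∈ X, ∀ v ∈ X, (u ∈ Z ↔ v ∈ Z) := by
  simp only [Splits, not_and, not_exists]
  constructor
  · intro h u hu v hv
    exact ⟨fun huZ => not_not.mp (h ⟨u, hu, huZ⟩ v hv),
      fun hvZ => not_not.mp (h ⟨v, hv, hvZ⟩ u hu)⟩
  · rintro h ⟨u, hu, huZ⟩ v hv hvZ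
    exact hvZ ((h u hu v hv).mp huZ)

lemma Overlaps.splits {V : Type*} [DecidableEq V] {M X : Finset V} (h : Overlaps M X) :
    Splits M X := by
  obtain ⟨⟨u, hu⟩, -, ⟨v, hv⟩⟩ := h
  rw [Finset.mem_inter] at hu
  rw [Finset.mem_sdiff] at hv
  exact ⟨⟨u, hu.2, hu.1⟩, ⟨v, hv⟩⟩

section LFOrder

variable {ι V : Type*} [LinearOrder ι] {S : ι → Finset V}

def IsLFOrder (S : ι → Finset V) : Prop :=
  ∀ a b, (S b).card < (S a).card → a < b

lemma IsLFOrder.card_le_of_le (hS : IsLFOrder S) {i j : ι} (hji : j ≤ i) :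
    (S i).card ≤ (S j).card :=
  not_lt.mp fun h => (hS i j h).not_ge hji

end LFOrder

section LexColumnOrder

variable {ι V : Type*} [LinearOrder ι] [LinearOrder V]

def IsLexColumnOrder (S : ι → Finset V) : Prop :=
  ∀ v w : V, v < w → ∀ i, ¬(v ∈ S i ↔ w ∈ S i) → (∀ j < i, (v ∈ S j ↔ w ∈ S j)) →
    v ∉ S i ∧ w ∈ S i

variable {S : ι → Finset V}

lemma IsLexColumnOrder.mem_of_le (hS : IsLexColumnOrder S) {i : ι} {v w : V} (hvw : v ≤ w)
    (hagree : ∀ j < i, (v ∈ S j ↔ w ∈ S j)) (hv : v ∈ S i) : w ∈ S i := by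
  rcases hvw.eq_or_lt with rfl | hlt
  · exact hv
  · by_contra hw
    exact (hS v w hlt i (fun h => hw (h.mp hv)) hagree).1 hv

lemma IsLexColumnOrder.left_notMem_and_right_mem (hS : IsLexColumnOrder S)
    {X : Finset V} {l r : V} (hl : IsLeast (X : Set V) l) (hr : IsGreatest (X : Set V) r)
    {i : ι} (hi : Splits (S i) X) (hfirst : ∀ j < i, ¬Splits (S j) X) :
    l ∉ S i ∧ r ∈ S i := by
  have hagree : ∀ j < i, ∀ u ∈ X, ∀ v ∈ X, (u ∈ S j ↔ v ∈ S j) :=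
    fun j hj => not_splits_iff.mp (hfirst j hj)
  obtain ⟨⟨u, hu, huZ⟩, ⟨v, hv, hvZ⟩⟩ := hi
  refine ⟨fun hlZ => hvZ ?_, ?_⟩
  · exact hS.mem_of_le (hl.2 hv) (fun j hj => hagree j hj l hl.1 v hv) hlZ
  · exact hS.mem_of_le (hr.2 hu) (fun j hj => hagree j hj u hu r hr.1) huZ

lemma IsLexColumnOrder.exists_le_left_notMem_and_right_mem [Finite ι]
    (hS : IsLexColumnOrder S) {X : Finset V} {l r : V} (hl : IsLeast (X : Set V) l)
    (hr : IsGreatest (X : Set V) r) {i : ι} (hi : Splits (S i) X) :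
    ∃ j ≤ i, l ∉ S j ∧ r ∈ S j := by
  obtain ⟨j, hj, hjmin⟩ := wellFounded_lt.has_min {j | Splits (S j) X} ⟨i, hi⟩
  exact ⟨j, not_lt.mp (hjmin i hi),
    hS.left_notMem_and_right_mem hl hr hj fun k hk hkX => hjmin k hkX hk⟩

end LexColumnOrder

lemma overlaps_of_card_le {V : Type*} [DecidableEq V] {X Y : Finset V} {l r : V}
    (hcard : X.card ≤ Y.card) (hlX : l ∈ X) (hlY : l ∉ Y) (hrX : r ∈ X) (hrY : r ∈ Y) :
    Overlaps Y X := by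
  refine ⟨⟨r, Finset.mem_inter.mpr ⟨hrY, hrX⟩⟩, ?_, ⟨l, Finset.mem_sdiff.mpr ⟨hlX, hlY⟩⟩⟩
  by_contra hYX
  rw [Finset.not_nonempty_iff_eq_empty, Finset.sdiff_eq_empty_iff_subset] at hYX
  exact hlY (Finset.eq_of_subset_of_card_le hYX hcard ▸ hlX)

theorem stmt8_general {V : Type*} [DecidableEq V]
    (F : Finset (Finset V))
    (lo : LinearOrder {X : Finset V // X ∈ F})
    (hLF : ∀ A B : {X : Finset V // X ∈ F},
      (B : Finset V).card < (A : Finset V).card → lo.lt A B)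
    (lv : LinearOrder V)
    (hlex : ∀ v w : V, lv.lt v w →
      ∀ Z : {X : Finset V // X ∈ F},
        ¬(v ∈ (Z : Finset V) ↔ w ∈ (Z : Finset V)) →
        (∀ Z' : {X : Finset V // X ∈ F}, lo.lt Z' Z →
          (v ∈ (Z' : Finset V) ↔ w ∈ (Z' : Finset V))) →
        v ∉ (Z : Finset V) ∧ w ∈ (Z : Finset V))
    (X : {X : Finset V // X ∈ F})
    (l r : V)
    (hl : l ∈ (X : Finset V) ∧ ∀ u ∈ (X : Finset V), lv.le l u)
    (hr : r ∈ (X : Finset V) ∧ ∀ u ∈ (X : Finset V), lv.le u r) :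
    (∃ M : {X : Finset V // X ∈ F},
        (X : Finset V).card ≤ (M : Finset V).card ∧
        Overlaps (M : Finset V) (X : Finset V)) ↔
    (∃ Y : {X : Finset V // X ∈ F},
        (X : Finset V).card ≤ (Y : Finset V).card ∧
        l ∉ (Y : Finset V) ∧ r ∈ (Y : Finset V)) := by
  let _ := lo
  let _ := lv
  have hLF' : IsLFOrder (fun Z : {X : Finset V // X ∈ F} => (Z : Finset V)) := hLF
  have hS : IsLexColumnOrder (fun Z : {X : Finset V // X ∈ F} => (Z : Finset V)) := hlex
  constructor
  · rintro ⟨M, hMc, hMX⟩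
    obtain ⟨Z, hZM, hlZ, hrZ⟩ := hS.exists_le_left_notMem_and_right_mem
      (X := X) ⟨hl.1, fun u hu => hl.2 u hu⟩ ⟨hr.1, fun u hu => hr.2 u hu⟩ hMX.splits
    exact ⟨Z, hMc.trans (hLF'.card_le_of_le hZM), hlZ, hrZ⟩
  · rintro ⟨Y, hYc, hlY, hrY⟩
    exact ⟨Y, hYc, overlaps_of_card_le hYc hl.1 hlY hr.1 hrY⟩

/-- Fix an LF order `lo` on `F` and a lex column order `lv` on `V`, and let
`X ∈ F` be nonempty. Then `Max(X)` is defined (some set of `F` of size `≥ |X|`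
overlaps `X`) iff there exists `Y ∈ F` with `|Y| ≥ |X|`, `left(X) ∉ Y` and
`right(X) ∈ Y`. -/
theorem stmt8 {V : Type*} [Fintype V] [DecidableEq V]
    (F : Finset (Finset V))
    (lo : LinearOrder {X : Finset V // X ∈ F})
    (hLF : ∀ A B : {X : Finset V // X ∈ F},
      (B : Finset V).card < (A : Finset V).card → lo.lt A B)
    (lv : LinearOrder V)
    (hlex : ∀ v w : V, lv.lt v w →
      ∀ Z : {X : Finset V // X ∈ F},
        ¬(v ∈ (Z : Finset V) ↔ w ∈ (Z : Finset V)) →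
        (∀ Z' : {X : Finset V // X ∈ F}, lo.lt Z' Z →
          (v ∈ (Z' : Finset V) ↔ w ∈ (Z' : Finset V))) →
        v ∉ (Z : Finset V) ∧ w ∈ (Z : Finset V))
    (X : {X : Finset V // X ∈ F}) (hXne : (X : Finset V).Nonempty)
    (l r : V)
    (hl : l ∈ (X : Finset V) ∧ ∀ u ∈ (X : Finset V), lv.le l u)
    (hr : r ∈ (X : Finset V) ∧ ∀ u ∈ (X : Finset V), lv.le u r) :
    (∃ M : {X : Finset V // X ∈ F},
        (X : Finset V).card ≤ (M : Finset V).card ∧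
        Overlaps (M : Finset V) (X : Finset V)) ↔
    (∃ Y : {X : Finset V // X ∈ F},
        (X : Finset V).card ≤ (Y : Finset V).card ∧
        l ∉ (Y : Finset V) ∧ r ∈ (Y : Finset V)) :=
  stmt8_general F lo hLF lv hlex X l r hl hr
end
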